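/- arXiv:1703.01689 — 2 statements merged into one kernel-verified Lean document; each statement's English description precedes it below -/
import Mathlib

section
/- Let ν = ±1 and let N(z) be the diagonal matrix diag(z² n, n) for a nonzero complex number n and nonzero z. Let V(t,z) = iω(z)σ₃ + H(t,z) with ω(z) = ½(z-z⁻¹)², H₁₁ = -H₂₂ = -iν Re(g₀(t)conj(g₋₁(t))), H₁₂ = i(z g₀(t) - z⁻¹ g₋₁(t)), H₂₁ = iν(z conj(g₋₁(t)) - z⁻¹ conj(g₀(t))). If g₀(t) = 0 for all t, then V(t, 1/z)·N(z) = N(z)·V(t, z) for all t and all nonzero z. -/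
open Complex Matrix ComplexConjugate

/-- The t-part Lax matrix V(t,z) = iω(z)σ₃ + H(t,z) of the Ablowitz-Ladik system with
boundary data (g₀(t), g₋₁(t)). -/
noncomputable def VAL (ν : ℂ) (g0 gm1 : ℝ → ℂ) (t : ℝ) (z : ℂ) :
    Matrix (Fin 2) (Fin 2) ℂ :=
  !![Complex.I * ((1 / 2) * (z - z⁻¹) ^ 2) -
        Complex.I * ν * ((g0 t * conj (gm1 t)).re : ℂ),
      Complex.I * (z * g0 t - z⁻¹ * gm1 t);
     Complex.I * ν * (z * conj (gm1 t) - z⁻¹ * conj (g0 t)),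
      -(Complex.I * ((1 / 2) * (z - z⁻¹) ^ 2)) +
        Complex.I * ν * ((g0 t * conj (gm1 t)).re : ℂ)]

/-- Linearizable boundary condition, Case 1 (g₀ ≡ 0): the matrix N(z) = diag(z²n, n)
intertwines V(t,1/z) and V(t,z). -/
theorem stmt12 (ν : ℂ) (hν : ν = 1 ∨ ν = -1) (g0 gm1 : ℝ → ℂ) (n : ℂ) (hn : n ≠ 0)
    (hg0 : ∀ t, g0 t = 0) :
    ∀ (t : ℝ) (z : ℂ), z ≠ 0 →
      VAL ν g0 gm1 t z⁻¹ * !![z ^ 2 * n, 0; 0, n] =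
        !![z ^ 2 * n, 0; 0, n] * VAL ν g0 gm1 t z := by
  intro t z hz
  unfold VAL
  rw [hg0 t]
  ext i j
  fin_cases i <;> fin_cases j <;>
    simp [Matrix.mul_apply, Fin.sum_univ_two, inv_inv] <;>
    field_simp <;> ring
end

section
/- Let c be a real constant, z a nonzero complex number with z² ≠ c and 1 - c z² ≠ 0, and suppose g₋₁(t) = c·g₀(t). Then the diagonal matrix N(z) = diag((1 - c z²)/(z² - c), 1) satisfies V(t, 1/z)·N(z) = N(z)·V(t, z), where V(t,z) = iω(z)σ₃ + H(t,z) is the Ablowitz-Ladik t-part Lax matrix with boundary data (g₀, g₋₁) = (g₀, c g₀). -/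
open Complex Matrix ComplexConjugate

/-- Linearizable boundary condition, Case 3 (g₋₁ = c g₀ with c real): the matrix
N(z) = diag((1 - cz²)/(z² - c), 1) intertwines V(t,1/z) and V(t,z). -/
theorem stmt14 (ν : ℂ) (hν : ν = 1 ∨ ν = -1) (c : ℝ) (g0 gm1 : ℝ → ℂ)
    (z : ℂ) (hz : z ≠ 0) (hz1 : z ^ 2 - (c : ℂ) ≠ 0) (hz2 : 1 - (c : ℂ) * z ^ 2 ≠ 0)
    (hgm1 : ∀ t, gm1 t = (c : ℂ) * g0 t) :
    ∀ t : ℝ,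
      VAL ν g0 gm1 t z⁻¹ * !![(1 - (c : ℂ) * z ^ 2) / (z ^ 2 - (c : ℂ)), 0; 0, 1] =
        !![(1 - (c : ℂ) * z ^ 2) / (z ^ 2 - (c : ℂ)), 0; 0, 1] * VAL ν g0 gm1 t z := by
  intro t
  have h := hgm1 t
  ext i j
  fin_cases i <;> fin_cases j <;>
    simp [VAL, Matrix.mul_apply, Fin.sum_univ_two, h, _root_.map_mul, Complex.conj_ofReal] <;>
    field_simp <;> ring
end
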